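/- arXiv:2105.05740 — 6 statements merged into one kernel-verified Lean document; each statement's English description precedes it below -/
import Mathlib

section
/- For every real h with 0 ≤ h ≤ a (a the real root of a^3 + 2a^2 + 3a - 2 = 0), one has S·(N₁ h)^2 ≤ a(1+a) < 1, where S = 2(1+h)/(h^2+2h+3) and N₁ = (h^2+2h+3)/2; equivalently, h^2 (h^2+2h+3)(1+h)/2 ≤ a(1+a). -/
/-!
Since `N₁ h = (h ^ 2 + 2 * h + 3) / 2`, we have `S = (1 + h) / N₁ h`, so
`S · (N₁ h · h) ^ 2 = h (1 + h) · h N₁ h`. Both factors are increasing in `h ≥ 0`, and the cubic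
defining `a` says exactly `a N₁ a = 1`; hence the bound is `a (1 + a) · 1`. The same identity
forces `0 < a < 1/2`, which gives `a (1 + a) < 1`.
-/

noncomputable section

def N₁ (h : ℝ) : ℝ := (h ^ 2 + 2 * h + 3) / 2

lemma N₁_pos (h : ℝ) : 0 < N₁ h := by
  unfold N₁
  nlinarith [sq_nonneg (h + 1)]

lemma mul_N₁_le_mul_N₁ {h a : ℝ} (hh0 : 0 ≤ h) (hha : h ≤ a) : h * N₁ h ≤ a * N₁ a := by
  unfold N₁
  have ha0 : 0 ≤ a := hh0.trans hha
  gcongr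

lemma mul_N₁_eq_one_of_cubic {a : ℝ} (ha : a ^ 3 + 2 * a ^ 2 + 3 * a - 2 = 0) :
    a * N₁ a = 1 := by
  unfold N₁
  linear_combination ha / 2

lemma cubic_root_mem_Ioo {a : ℝ} (ha : a ^ 3 + 2 * a ^ 2 + 3 * a - 2 = 0) :
    a ∈ Set.Ioo 0 (1 / 2) := by
  have hN := mul_N₁_eq_one_of_cubic ha
  have hpos : 0 < a := pos_of_mul_pos_left (hN ▸ one_pos) (N₁_pos a).le
  refine ⟨hpos, lt_of_not_ge fun hge => ?_⟩
  have := mul_N₁_le_mul_N₁ (by norm_num) hge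
  rw [hN] at this
  norm_num [N₁] at this

lemma S_mul_N₁_mul_sq (h : ℝ) :
    2 * (1 + h) / (h ^ 2 + 2 * h + 3) * (N₁ h * h) ^ 2 = h * (1 + h) * (h * N₁ h) := by
  have hN := N₁_pos h
  unfold N₁ at *
  field_simp

end

theorem S_N1h_sq_le_general (a : ℝ) (ha : a ^ 3 + 2 * a ^ 2 + 3 * a - 2 = 0)
    (h : ℝ) (hh0 : 0 ≤ h) (hha : h ≤ a) :
    2 * (1 + h) / (h ^ 2 + 2 * h + 3) * ((h ^ 2 + 2 * h + 3) / 2 * h) ^ 2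
        ≤ a * (1 + a) ∧
      a * (1 + a) < 1 := by
  obtain ⟨ha0, ha_half⟩ := cubic_root_mem_Ioo ha
  refine ⟨?_, by nlinarith⟩
  calc _ = h * (1 + h) * (h * N₁ h) := S_mul_N₁_mul_sq h
    _ ≤ a * (1 + a) * (a * N₁ a) := by
      have hh1 : h * (1 + h) ≤ a * (1 + a) := by gcongr
      exact mul_le_mul hh1 (mul_N₁_le_mul_N₁ hh0 hha)
        (mul_nonneg hh0 (N₁_pos h).le) (by positivity)
    _ = a * (1 + a) := by rw [mul_N₁_eq_one_of_cubic ha, mul_one]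

theorem S_N1h_sq_le (a : ℝ) (ha : a ^ 3 + 2 * a ^ 2 + 3 * a - 2 = 0)
    (ha1 : (0.477 : ℝ) < a) (ha2 : a < 0.478)
    (h : ℝ) (hh0 : 0 ≤ h) (hha : h ≤ a) :
    2 * (1 + h) / (h ^ 2 + 2 * h + 3) * ((h ^ 2 + 2 * h + 3) / 2 * h) ^ 2
        ≤ a * (1 + a) ∧
      a * (1 + a) < 1 :=
  S_N1h_sq_le_general a ha h hh0 hha
end

section
/- Let 0 < h ≤ a, where a is the real root of a^3 + 2a^2 + 3a - 2 = 0, let S = 2(1+h)/(h^2+2h+3), ε₂ = h(1+h)/2, and suppose ε : ℕ → ℝ satisfies ε₁ = 1, and εₙ ≤ S^{n-2} · ε₂ · (N₁ h)^{2^{n-1}-2} for n ≥ 2, with N₁ = (h^2+2h+3)/2. Then the series γ = Σ_{n≥1} εₙ converges and satisfies 1 ≤ γ ≤ 1 + ε₂/(1 - S (N₁ h)^2) ≤ (2 - a - a^2)/(2(1 - a - a^2)). -/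
/-!
Write `x = N₁ h = h (h² + 2h + 3)/2`. This is increasing in `h` and equals `1` at `h = a`
(that is the cubic), so `x ≤ 1`; hence the doubly exponential bound on `εₙ` is dominated by the
geometric one `ε₂ rⁿ⁻²` with `r = S x² = 2 ε₂ x ≤ h + h² ≤ a + a² < 1`, and summing it gives the
bounds, the last one after replacing `ε₂` and `r` by their upper bounds `(a + a²)/2` and `a + a²`.
-/

lemma pow_two_pow_sub_two_le_sq_pow {x : ℝ} (hx0 : 0 ≤ x) (hx1 : x ≤ 1) (n : ℕ) :
    x ^ (2 ^ (n + 1) - 2) ≤ (x ^ 2) ^ n := by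
  rw [← pow_mul]
  refine pow_le_pow_of_le_one hx0 hx1 ?_
  have := Nat.lt_two_pow_self (n := n)
  rw [pow_succ]
  omega

lemma le_geometric_of_le_doubly_exponential {ε : ℕ → ℝ} {S c x : ℝ} (hS : 0 ≤ S) (hc : 0 ≤ c)
    (hx0 : 0 ≤ x) (hx1 : x ≤ 1)
    (hε : ∀ n, 2 ≤ n → ε n ≤ S ^ (n - 2) * c * x ^ (2 ^ (n - 1) - 2)) (n : ℕ) :
    ε (n + 2) ≤ c * (S * x ^ 2) ^ n :=
  calc ε (n + 2) ≤ S ^ n * c * x ^ (2 ^ (n + 1) - 2) := hε (n + 2) (by omega)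
    _ ≤ S ^ n * c * (x ^ 2) ^ n := by
      gcongr
      exact pow_two_pow_sub_two_le_sq_pow hx0 hx1 n
    _ = c * (S * x ^ 2) ^ n := by ring

lemma summable_and_tsum_bounds_of_le_geometric {f : ℕ → ℝ} {c r : ℝ} (hf : ∀ n, 0 ≤ f n)
    (hr0 : 0 ≤ r) (hr1 : r < 1) (hfr : ∀ n, f (n + 1) ≤ c * r ^ n) :
    Summable f ∧ f 0 ≤ ∑' n, f n ∧ ∑' n, f n ≤ f 0 + c / (1 - r) := by
  have hgeom : Summable fun n ↦ c * r ^ n := (summable_geometric_of_lt_one hr0 hr1).mul_left c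
  have htail : Summable fun n ↦ f (n + 1) := .of_nonneg_of_le (fun n ↦ hf _) hfr hgeom
  have hsum : Summable f := (summable_nat_add_iff 1).mp htail
  refine ⟨hsum, hsum.le_tsum 0 fun n _ ↦ hf n, ?_⟩
  calc ∑' n, f n = f 0 + ∑' n, f (n + 1) := hsum.tsum_eq_zero_add
    _ ≤ f 0 + ∑' n, c * r ^ n := add_le_add_right (htail.tsum_le_tsum hfr hgeom) _
    _ = f 0 + c / (1 - r) := by
      rw [tsum_mul_left, tsum_geometric_of_lt_one hr0 hr1, div_eq_mul_inv]

lemma one_add_div_one_sub_le {e r u : ℝ} (he0 : 0 ≤ e) (heu : 2 * e ≤ u) (hru : r ≤ u)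
    (hu : u < 1) : 1 + e / (1 - r) ≤ (2 - u) / (2 * (1 - u)) := by
  have hu0 : 0 < 1 - u := by linarith
  calc 1 + e / (1 - r) ≤ 1 + (u / 2) / (1 - u) := by gcongr <;> linarith
    _ = (2 - u) / (2 * (1 - u)) := by field_simp; ring

lemma add_sq_lt_one_of_cubic {a : ℝ} (ha : a ^ 3 + 2 * a ^ 2 + 3 * a - 2 = 0) :
    a + a ^ 2 < 1 := by
  nlinarith [sq_nonneg (a + 1), sq_nonneg (a - 1)]

lemma mul_quadratic_le_two_of_le_cubic_root {a h : ℝ} (ha : a ^ 3 + 2 * a ^ 2 + 3 * a - 2 = 0)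
    (hh0 : 0 < h) (hha : h ≤ a) :
    h * (h ^ 2 + 2 * h + 3) ≤ 2 := by
  nlinarith [mul_nonneg (sub_nonneg.mpr hha) (add_pos hh0 hh0).le, sq_nonneg (a + h)]

theorem gamma_series_bounds_general (a : ℝ) (ha : a ^ 3 + 2 * a ^ 2 + 3 * a - 2 = 0)
    (h : ℝ) (hh0 : 0 < h) (hha : h ≤ a)
    (S N₁ ε₂ : ℝ) (hS : S = 2 * (1 + h) / (h ^ 2 + 2 * h + 3))
    (hN₁ : N₁ = (h ^ 2 + 2 * h + 3) / 2) (hε₂ : ε₂ = h * (1 + h) / 2)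
    (ε : ℕ → ℝ) (hεpos : ∀ n, 0 ≤ ε n) (hε1 : ε 1 = 1)
    (hεn : ∀ n, 2 ≤ n → ε n ≤ S ^ (n - 2) * ε₂ * (N₁ * h) ^ (2 ^ (n - 1) - 2)) :
    Summable (fun n : ℕ => ε (n + 1)) ∧
      1 ≤ ∑' n : ℕ, ε (n + 1) ∧
      (∑' n : ℕ, ε (n + 1)) ≤ 1 + ε₂ / (1 - S * (N₁ * h) ^ 2) ∧
      1 + ε₂ / (1 - S * (N₁ * h) ^ 2) ≤ (2 - a - a ^ 2) / (2 * (1 - a - a ^ 2)) := by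
  have hS0 : 0 ≤ S := by rw [hS]; positivity
  have hε₂0 : 0 ≤ ε₂ := by rw [hε₂]; positivity
  have hx0 : 0 ≤ N₁ * h := by rw [hN₁]; positivity
  have hx1 : N₁ * h ≤ 1 := by
    rw [hN₁]; linarith [mul_quadratic_le_two_of_le_cubic_root ha hh0 hha]
  have hr : S * (N₁ * h) ^ 2 = 2 * ε₂ * (N₁ * h) := by
    rw [hS, hN₁, hε₂]; field_simp
  have hu : a + a ^ 2 < 1 := add_sq_lt_one_of_cubic ha
  have hε₂u : 2 * ε₂ ≤ a + a ^ 2 := by rw [hε₂]; nlinarith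
  have hru : S * (N₁ * h) ^ 2 ≤ a + a ^ 2 := by
    rw [hr]; exact (mul_le_of_le_one_right (by positivity) hx1).trans hε₂u
  obtain ⟨hsum, hlow, hup⟩ := summable_and_tsum_bounds_of_le_geometric
    (f := fun n ↦ ε (n + 1)) (fun n ↦ hεpos _) (by positivity) (by linarith)
    (le_geometric_of_le_doubly_exponential hS0 hε₂0 hx0 hx1 hεn)
  refine ⟨hsum, hε1 ▸ hlow, hε1 ▸ hup, ?_⟩
  exact (one_add_div_one_sub_le hε₂0 hε₂u hru hu).trans_eq (by ring)

theorem gamma_series_bounds (a : ℝ) (ha : a ^ 3 + 2 * a ^ 2 + 3 * a - 2 = 0)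
    (ha1 : (0.477 : ℝ) < a) (ha2 : a < 0.478)
    (h : ℝ) (hh0 : 0 < h) (hha : h ≤ a)
    (S N₁ ε₂ : ℝ) (hS : S = 2 * (1 + h) / (h ^ 2 + 2 * h + 3))
    (hN₁ : N₁ = (h ^ 2 + 2 * h + 3) / 2) (hε₂ : ε₂ = h * (1 + h) / 2)
    (ε : ℕ → ℝ) (hεpos : ∀ n, 0 ≤ ε n) (hε1 : ε 1 = 1)
    (hεn : ∀ n, 2 ≤ n → ε n ≤ S ^ (n - 2) * ε₂ * (N₁ * h) ^ (2 ^ (n - 1) - 2)) :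
    Summable (fun n : ℕ => ε (n + 1)) ∧
      1 ≤ ∑' n : ℕ, ε (n + 1) ∧
      (∑' n : ℕ, ε (n + 1)) ≤ 1 + ε₂ / (1 - S * (N₁ * h) ^ 2) ∧
      1 + ε₂ / (1 - S * (N₁ * h) ^ 2) ≤ (2 - a - a ^ 2) / (2 * (1 - a - a ^ 2)) :=
  gamma_series_bounds_general a ha h hh0 hha S N₁ ε₂ hS hN₁ hε₂ ε hεpos hε1 hεn
end

section
/- Let X be a Banach space, P : X → X twice Fréchet differentiable, x₀ ∈ X with U₀ = [P'(x₀)]⁻¹ existing, ‖U₀‖ ≤ B, ‖P(x₀)‖ ≤ η, ‖P''(x)‖ ≤ K on the ball G = {x : ‖x - x₀‖ ≤ (2-a-a²)/(2(1-a-a²))·Bη}, and h = B²ηK ≤ a, where a is the real root of a³+2a²+3a-2=0. Then the iteration x_{n+1} = x_n - U_n P(x_n), with U_n = [2I - U_{n-1}P'(x_n)]U_{n-1}, remains in G, converges to a solution x* ∈ G of P(x) = 0, and ‖x_n - x*‖ ≤ (h(1+h)/2)·(S^{n-1}/(1-S))·(N₁h)^{2^n - 2}·Bη, with S = 2(1+h)/(h²+2h+3)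 and N₁ = (h²+2h+3)/2. -/
open Set in
lemma kogan_taylor {X : Type*} [NormedAddCommGroup X] [NormedSpace ℝ X]
    (P : X → X) (P' : X → X →L[ℝ] X) (hP' : ∀ z, HasFDerivAt P (P' z) z)
    {K : ℝ} {s : Set X} (hs : Convex ℝ s)
    (hlip : ∀ u ∈ s, ∀ w ∈ s, ‖P' u - P' w‖ ≤ K * ‖u - w‖)
    {x y : X} (hx : x ∈ s) (hy : y ∈ s) :
    ‖P y - P x - P' x (y - x)‖ ≤ K / 2 * ‖y - x‖ ^ 2 := by
  set v := y - x with hv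
  set g : ℝ → X := fun t => P (x + t • v) - t • (P' x v) - P x with hg
  have hmem : ∀ t ∈ Icc (0:ℝ) 1, x + t • v ∈ s := by
    intro t ht
    have h1 : (1 - t) • x + t • y ∈ s := hs hx hy (by linarith [ht.2]) ht.1 (by ring)
    have : x + t • v = (1 - t) • x + t • y := by rw [hv]; module
    rw [this]; exact h1
  have hder : ∀ t : ℝ, HasDerivAt g ((P' (x + t • v)) v - P' x v) t := by
    intro t
    have h1 : HasDerivAt (fun t : ℝ => x + t • v) v t := by
      simpa using ((hasDerivAt_id t).smul_const v).const_add x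
    have h2 : HasDerivAt (fun t : ℝ => P (x + t • v)) ((P' (x + t • v)) v) t :=
      (hP' (x + t • v)).comp_hasDerivAt t h1
    have h3 : HasDerivAt (fun t : ℝ => t • (P' x v)) (P' x v) t := by
      simpa using (hasDerivAt_id t).smul_const (P' x v)
    exact (h2.sub h3).sub_const (P x)
  have hBder : ∀ t : ℝ, HasDerivAt (fun t : ℝ => K / 2 * ‖v‖ ^ 2 * t ^ 2)
      (K * ‖v‖ ^ 2 * t) t := by
    intro t
    have := (hasDerivAt_pow 2 t).const_mul (K / 2 * ‖v‖ ^ 2)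
    convert this using 1
    · rfl
    · rfl
    · simp; ring
  have hbound : ∀ t ∈ Ico (0:ℝ) 1,
      ‖(P' (x + t • v)) v - P' x v‖ ≤ K * ‖v‖ ^ 2 * t := by
    intro t ht
    have hts : x + t • v ∈ s := hmem t ⟨ht.1, le_of_lt ht.2⟩
    have h1 : ‖(P' (x + t • v)) v - P' x v‖ ≤ ‖P' (x + t • v) - P' x‖ * ‖v‖ := by
      have := (P' (x + t • v) - P' x).le_opNorm v
      simpa using this
    have h2 : ‖P' (x + t • v) - P' x‖ ≤ K * (t * ‖v‖) := by
      have := hlip (x + t • v) hts x hx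
      simpa [norm_smul, abs_of_nonneg ht.1] using this
    calc ‖(P' (x + t • v)) v - P' x v‖ ≤ K * (t * ‖v‖) * ‖v‖ :=
          h1.trans (by
            apply mul_le_mul_of_nonneg_right h2 (norm_nonneg v))
      _ = K * ‖v‖ ^ 2 * t := by ring
  have key := image_norm_le_of_norm_deriv_right_le_deriv_boundary (f := g) (a := 0) (b := 1)
      (f' := fun t => (P' (x + t • v)) v - P' x v)
      (B := fun t => K / 2 * ‖v‖ ^ 2 * t ^ 2)
      (B' := fun t => K * ‖v‖ ^ 2 * t)
      (fun t _ => (hder t).continuousAt.continuousWithinAt)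
      (fun t _ => (hder t).hasDerivWithinAt)
      (by simp [hg]) hBder hbound
  have hk1 := key (Set.mem_Icc.2 ⟨zero_le_one, le_refl 1⟩)
  have hg1 : g 1 = P y - P x - P' x v := by
    simp only [hg, one_smul, hv]
    rw [add_sub_cancel]
    abel
  rw [hg1] at hk1
  simpa using hk1

noncomputable def kseq (B η K : ℝ) : ℕ → ℝ × ℝ × ℝ
  | 0 => (B, η, 0)
  | n + 1 =>
    ((kseq B η K n).1 * (1 + ((kseq B η K n).2.2 + (kseq B η K n).1 ^ 2 * (kseq B η K n).2.1 * K)),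
     ((kseq B η K n).2.2 + (kseq B η K n).1 ^ 2 * (kseq B η K n).2.1 * K / 2) * (kseq B η K n).2.1,
     ((kseq B η K n).2.2 + (kseq B η K n).1 ^ 2 * (kseq B η K n).2.1 * K) ^ 2)


lemma kogan_u3 (u a : ℝ) (hu0 : 0 ≤ u) (hua : u ≤ a)
    (haroot : a ^ 3 + 2 * a ^ 2 + 3 * a - 2 = 0)
    (ha1 : (0.477 : ℝ) < a) (ha2 : a < 0.478) :
    u ^ 2 + (1 + u) ^ 2 * (u ^ 2 / 2) ≤ u := by
  have hcube : u ^ 3 + 2 * u ^ 2 + 3 * u ≤ 2 := by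
    nlinarith [mul_nonneg (sub_nonneg.2 hua)
      (show (0:ℝ) ≤ a^2 + a*u + u^2 + 2*a + 2*u + 3 by positivity)]
  nlinarith [mul_le_mul_of_nonneg_left hcube hu0]

lemma kogan_u_step (ε w a H : ℝ) (hε : 0 ≤ ε) (hw : 0 ≤ w)
    (hun : ε + w ≤ H) (hha : H ≤ a)
    (haroot : a ^ 3 + 2 * a ^ 2 + 3 * a - 2 = 0)
    (ha1 : (0.477 : ℝ) < a) (ha2 : a < 0.478) :
    (ε + w) ^ 2 + (1 + (ε + w)) ^ 2 * ((ε + w / 2) * w) ≤ ε + w ∧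
    (ε + w) ^ 2 + (1 + (ε + w)) ^ 2 * ((ε + w / 2) * w)
      ≤ (ε + w) ^ 2 * (((ε + w) ^ 2 + 2 * (ε + w) + 3) / 2) := by
  have hu0 : 0 ≤ ε + w := by positivity
  have hua : ε + w ≤ a := le_trans hun hha
  have h1 : (ε + w / 2) * w ≤ (ε + w) ^ 2 / 2 := by nlinarith [sq_nonneg ε]
  have h2 : (ε + w) ^ 2 + (1 + (ε + w)) ^ 2 * ((ε + w / 2) * w)
      ≤ (ε + w) ^ 2 + (1 + (ε + w)) ^ 2 * ((ε + w) ^ 2 / 2) :=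
    add_le_add (le_refl _) (mul_le_mul_of_nonneg_left h1 (sq_nonneg (1 + (ε + w))))
  constructor
  · exact h2.trans (kogan_u3 (ε + w) a hu0 hua haroot ha1 ha2)
  · refine h2.trans (le_of_eq ?_)
    ring

lemma kogan_core (a h B η S r : ℝ) (haroot : a ^ 3 + 2 * a ^ 2 + 3 * a - 2 = 0)
    (ha1 : (0.477 : ℝ) < a) (ha2 : a < 0.478) (hh0 : 0 ≤ h) (hha : h ≤ a)
    (hB0 : 0 ≤ B) (hη0 : 0 ≤ η)
    (hS : S = 2 * (1 + h) / (h ^ 2 + 2 * h + 3))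
    (hr : r = (2 - a - a ^ 2) / (2 * (1 - a - a ^ 2)) * B * η) :
    B * η + h * (1 + h) / 2 * (B * η) * (1 / (1 - S)) ≤ r := by
  have haa : 0 < 1 - a - a ^ 2 := by nlinarith
  have hq0 : (0:ℝ) < h ^ 2 + 2 * h + 3 := by nlinarith
  have hq1 : (0:ℝ) < h ^ 2 + 1 := by positivity
  have h1S : 1 - S = (h ^ 2 + 1) / (h ^ 2 + 2 * h + 3) := by
    rw [hS]; field_simp; ring
  have hGc0 : (0:ℝ) ≤ 3 + 2*a - 6*a^2 - 8*a^3 - 4*a^4 - a^5 := by nlinarith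
  have hGc1 : (0:ℝ) ≤ 5 - 3*a - 8*a^2 - 4*a^3 - a^4 := by nlinarith
  have hGc2 : (0:ℝ) ≤ 3 - 2*a - 4*a^2 - a^3 := by nlinarith
  have hGnn : (0:ℝ) ≤ (3 + 2*a - 6*a^2 - 8*a^3 - 4*a^4 - a^5)
      + h * (5 - 3*a - 8*a^2 - 4*a^3 - a^4)
      + h^2 * (3 - 2*a - 4*a^2 - a^3)
      + h^3 * (1 - a - a^2) := by
    have p1 := mul_nonneg hh0 hGc1
    have p2 := mul_nonneg (pow_nonneg hh0 2) hGc2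
    have p3 := mul_nonneg (pow_nonneg hh0 3) haa.le
    linarith
  have hm : (a^3 + 2*a^2 + a) * (a ^ 3 + 2 * a ^ 2 + 3 * a - 2) = 0 := by
    rw [haroot]; ring
  have key : h * (1 + h) * (h ^ 2 + 2 * h + 3) * (1 - a - a ^ 2)
      ≤ (a + a ^ 2) * (h ^ 2 + 1) := by
    nlinarith [mul_nonneg (sub_nonneg.2 hha) hGnn, hm]
  have keyB := mul_le_mul_of_nonneg_right key (mul_nonneg hB0 hη0)
  rw [hr, h1S, one_div_div]
  have hfrac : h * (1 + h) / 2 * (B * η) * ((h ^ 2 + 2 * h + 3) / (h ^ 2 + 1))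
      = (h * (1 + h) * (h ^ 2 + 2 * h + 3) * (B * η)) / (2 * (h ^ 2 + 1)) := by
    field_simp
  have hfrac' : (h * (1 + h) * (h ^ 2 + 2 * h + 3) * (B * η)) / (2 * (h ^ 2 + 1))
      ≤ ((a + a ^ 2) * (B * η)) / (2 * (1 - a - a ^ 2)) := by
    rw [div_le_div_iff₀ (by positivity) (by linarith)]
    nlinarith [keyB]
  have hsplit : (2 - a - a ^ 2) / (2 * (1 - a - a ^ 2)) * B * η
      = B * η + ((a + a ^ 2) * (B * η)) / (2 * (1 - a - a ^ 2)) := by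
    field_simp; ring
  rw [hsplit, hfrac]
  linarith [hfrac']

set_option maxHeartbeats 2000000 in
theorem kogan_iteration_converges
    {X : Type*} [NormedAddCommGroup X] [NormedSpace ℝ X] [CompleteSpace X]
    (P : X → X) (P' : X → X →L[ℝ] X) (P'' : X → X →L[ℝ] X →L[ℝ] X)
    (hP' : ∀ x, HasFDerivAt P (P' x) x)
    (hP'' : ∀ x, HasFDerivAt P' (P'' x) x)
    (a : ℝ) (haroot : a ^ 3 + 2 * a ^ 2 + 3 * a - 2 = 0)
    (ha1 : (0.477 : ℝ) < a) (ha2 : a < 0.478)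
    (B η K : ℝ) (hB0 : 0 ≤ B) (hη0 : 0 ≤ η) (hK0 : 0 ≤ K)
    (x₀ : X) (x : ℕ → X) (U : ℕ → X →L[ℝ] X)
    (hx0 : x 0 = x₀)
    (hU0l : (U 0).comp (P' x₀) = ContinuousLinearMap.id ℝ X)
    (hU0r : (P' x₀).comp (U 0) = ContinuousLinearMap.id ℝ X)
    (hxrec : ∀ n, x (n + 1) = x n - (U n) (P (x n)))
    (hUrec : ∀ n, U (n + 1) =
      ((2 : ℝ) • ContinuousLinearMap.id ℝ X - (U n).comp (P' (x (n + 1)))).comp (U n))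
    (hBnorm : ‖U 0‖ ≤ B) (hηnorm : ‖P x₀‖ ≤ η)
    (r : ℝ) (hr : r = (2 - a - a ^ 2) / (2 * (1 - a - a ^ 2)) * B * η)
    (hKnorm : ∀ y : X, ‖y - x₀‖ ≤ r → ‖P'' y‖ ≤ K)
    (h S N₁ : ℝ) (hh : h = B ^ 2 * η * K) (hha : h ≤ a)
    (hS : S = 2 * (1 + h) / (h ^ 2 + 2 * h + 3))
    (hN₁ : N₁ = (h ^ 2 + 2 * h + 3) / 2) :
    (∀ n, ‖x n - x₀‖ ≤ r) ∧
    ∃ xs : X, ‖xs - x₀‖ ≤ r ∧ P xs = 0 ∧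
      Filter.Tendsto x Filter.atTop (nhds xs) ∧
      ∀ n : ℕ, 1 ≤ n →
        ‖x n - xs‖ ≤
          h * (1 + h) / 2 * (S ^ (n - 1) / (1 - S)) * (N₁ * h) ^ (2 ^ n - 2) * B * η := by
  -- ### basic numeric facts
  have hh0 : 0 ≤ h := by rw [hh]; positivity
  have ha0 : (0:ℝ) < a := lt_trans (by norm_num) ha1
  have haa : 0 < 1 - a - a ^ 2 := by nlinarith
  have hr0 : 0 ≤ r := by
    rw [hr]
    apply mul_nonneg (mul_nonneg (div_nonneg (by nlinarith) (by nlinarith)) hB0) hη0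
  have hq0 : (0:ℝ) < h ^ 2 + 2 * h + 3 := by nlinarith
  have hS0 : 0 < S := by rw [hS]; apply div_pos (by nlinarith) hq0
  have hS1 : S < 1 := by
    rw [hS, div_lt_one hq0]; nlinarith
  have hN₁0 : (0:ℝ) < N₁ := by rw [hN₁]; nlinarith
  have hSN : S * N₁ = 1 + h := by rw [hS, hN₁]; field_simp
  have hN₁h1 : N₁ * h ≤ 1 := by
    rw [hN₁]
    nlinarith [mul_nonneg (sub_nonneg.2 hha)
      (show (0:ℝ) ≤ a^2 + a*h + h^2 + 2*a + 2*h + 3 by positivity)]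
  have hN₁h0 : 0 ≤ N₁ * h := mul_nonneg hN₁0.le hh0
  have hhp : (0:ℝ) ≤ h * (1 + h) / 2 := by nlinarith
  have hhp2 : (0:ℝ) ≤ h * (1 + h) := by nlinarith
  -- ### the comparison sequences
  set bb : ℕ → ℝ := fun n => (kseq B η K n).1 with hbbdef
  set ee : ℕ → ℝ := fun n => (kseq B η K n).2.1 with heedef
  set eps : ℕ → ℝ := fun n => (kseq B η K n).2.2 with hepsdef
  have bb0 : bb 0 = B := by rw [hbbdef]; simp [kseq]
  have ee0 : ee 0 = η := by rw [heedef]; simp [kseq]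
  have eps0 : eps 0 = 0 := by rw [hepsdef]; simp [kseq]
  have bbS : ∀ n, bb (n+1) = bb n * (1 + (eps n + bb n ^ 2 * ee n * K)) := by
    intro n; rw [hbbdef, heedef, hepsdef]; simp [kseq]
  have eeS : ∀ n, ee (n+1) = (eps n + bb n ^ 2 * ee n * K / 2) * ee n := by
    intro n; rw [hbbdef, heedef, hepsdef]; simp [kseq]
  have epsS : ∀ n, eps (n+1) = (eps n + bb n ^ 2 * ee n * K) ^ 2 := by
    intro n; rw [hbbdef, heedef, hepsdef]; simp [kseq]
  -- ### numeric invariants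
  have hinv : ∀ n, 0 ≤ bb n ∧ 0 ≤ ee n ∧ 0 ≤ eps n ∧
      eps n + bb n ^ 2 * ee n * K ≤ h ∧
      N₁ * (eps n + bb n ^ 2 * ee n * K) ≤ (N₁ * h) ^ (2 ^ n) := by
    intro n
    induction n with
    | zero =>
      refine ⟨hB0, hη0, le_refl 0, ?_, ?_⟩
      · rw [eps0, bb0, ee0, hh]; ring_nf; exact le_refl _
      · rw [eps0, bb0, ee0, hh]; norm_num
    | succ n ih =>
      obtain ⟨hbn, hen, hepn, hun, hNn⟩ := ih
      have hw0 : 0 ≤ bb n ^ 2 * ee n * K := by positivity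
      obtain ⟨hstep1, hstep2⟩ := kogan_u_step (eps n) (bb n ^ 2 * ee n * K) a h
        hepn hw0 hun hha haroot ha1 ha2
      have hid : eps (n+1) + bb (n+1) ^ 2 * ee (n+1) * K
          = (eps n + bb n ^ 2 * ee n * K) ^ 2
            + (1 + (eps n + bb n ^ 2 * ee n * K)) ^ 2
              * ((eps n + bb n ^ 2 * ee n * K / 2) * (bb n ^ 2 * ee n * K)) := by
        rw [bbS, eeS, epsS]; ring
      have hhalf : eps n + bb n ^ 2 * ee n * K / 2
          = eps n + (bb n ^ 2 * ee n * K) / 2 := by ring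
      rw [hhalf] at hid
      have hu' : eps (n+1) + bb (n+1) ^ 2 * ee (n+1) * K ≤ eps n + bb n ^ 2 * ee n * K := by
        rw [hid]; exact hstep1
      refine ⟨?_, ?_, ?_, hu'.trans hun, ?_⟩
      · rw [bbS]; exact mul_nonneg hbn (by linarith)
      · rw [eeS]; exact mul_nonneg (by linarith) hen
      · rw [epsS]; positivity
      · have hu0 : 0 ≤ eps n + bb n ^ 2 * ee n * K := by positivity
        have hNu : ((eps n + bb n ^ 2 * ee n * K) ^ 2
              + 2 * (eps n + bb n ^ 2 * ee n * K) + 3) / 2 ≤ N₁ := by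
          rw [hN₁]
          have hsq : (eps n + bb n ^ 2 * ee n * K) ^ 2 ≤ h ^ 2 := pow_le_pow_left₀ hu0 hun 2
          linarith
        have hstep2' : eps (n+1) + bb (n+1) ^ 2 * ee (n+1) * K
            ≤ (eps n + bb n ^ 2 * ee n * K) ^ 2 * N₁ := by
          rw [hid]
          exact hstep2.trans (mul_le_mul_of_nonneg_left hNu (sq_nonneg _))
        have h4 : N₁ * (eps (n+1) + bb (n+1) ^ 2 * ee (n+1) * K)
            ≤ (N₁ * (eps n + bb n ^ 2 * ee n * K)) ^ 2 := by
          have h40 := mul_le_mul_of_nonneg_left hstep2' hN₁0.le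
          calc N₁ * (eps (n+1) + bb (n+1) ^ 2 * ee (n+1) * K)
              ≤ N₁ * ((eps n + bb n ^ 2 * ee n * K) ^ 2 * N₁) := h40
            _ = (N₁ * (eps n + bb n ^ 2 * ee n * K)) ^ 2 := by ring
        have h5 : (N₁ * (eps n + bb n ^ 2 * ee n * K)) ^ 2 ≤ ((N₁ * h) ^ 2 ^ n) ^ 2 :=
          pow_le_pow_left₀ (mul_nonneg hN₁0.le hu0) hNn 2
        have h6 : ((N₁ * h) ^ 2 ^ n) ^ 2 = (N₁ * h) ^ 2 ^ (n + 1) := by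
          rw [← pow_mul, ← pow_succ]
        exact h4.trans (h5.trans_eq h6)
  -- ### the Θ bound for products
  have hTheta : ∀ n, 1 ≤ n → bb n * ee n
      ≤ h * (1 + h) / 2 * S ^ (n - 1) * (N₁ * h) ^ (2 ^ n - 2) * (B * η) := by
    intro n hn
    induction n, hn using Nat.le_induction with
    | base =>
      apply le_of_eq
      rw [bbS, eeS, eps0, bb0, ee0, hh]
      norm_num
      ring
    | succ n hn ih =>
      obtain ⟨hbn, hen, hepn, hun, hNn⟩ := hinv n
      have hw0 : 0 ≤ bb n ^ 2 * ee n * K := by positivity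
      have h2n : 2 ≤ 2 ^ n := by
        calc 2 = 2 ^ 1 := rfl
        _ ≤ 2 ^ n := Nat.pow_le_pow_right (by norm_num) hn
      have e1 : S ^ (n + 1 - 1) = S ^ (n - 1) * S := by
        rw [Nat.add_sub_cancel]
        conv_lhs => rw [show n = (n - 1) + 1 by omega]
        rw [pow_succ]
      have e2 : (N₁ * h) ^ (2 ^ (n+1) - 2) = (N₁ * h) ^ (2 ^ n - 2) * (N₁ * h) ^ (2 ^ n) := by
        rw [← pow_add]
        congr 1
        have : 2 ^ (n+1) = 2 ^ n + 2 ^ n := by rw [pow_succ]; omega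
        omega
      calc bb (n+1) * ee (n+1)
          = ((1 + (eps n + bb n ^ 2 * ee n * K)) * (eps n + bb n ^ 2 * ee n * K / 2))
              * (bb n * ee n) := by rw [bbS, eeS]; ring
        _ ≤ ((1 + h) * (eps n + bb n ^ 2 * ee n * K)) * (bb n * ee n) := by
            apply mul_le_mul_of_nonneg_right ?_ (mul_nonneg hbn hen)
            apply mul_le_mul (by linarith) (by linarith) (by linarith) (by linarith)
        _ = (S * (N₁ * (eps n + bb n ^ 2 * ee n * K))) * (bb n * ee n) := by
            rw [← hSN]; ring
        _ ≤ (S * (N₁ * h) ^ (2 ^ n)) * (bb n * ee n) := by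
            apply mul_le_mul_of_nonneg_right
              (mul_le_mul_of_nonneg_left hNn hS0.le) (mul_nonneg hbn hen)
        _ ≤ (S * (N₁ * h) ^ (2 ^ n))
              * (h * (1 + h) / 2 * S ^ (n - 1) * (N₁ * h) ^ (2 ^ n - 2) * (B * η)) := by
            apply mul_le_mul_of_nonneg_left ih
            exact mul_nonneg hS0.le (pow_nonneg hN₁h0 _)
        _ = h * (1 + h) / 2 * S ^ (n + 1 - 1) * (N₁ * h) ^ (2 ^ (n+1) - 2) * (B * η) := by
            rw [e1, e2]; ring
  -- ### geometric sums
  have hgeom : ∀ m : ℕ, (∑ j ∈ Finset.range m, S ^ j) ≤ 1 / (1 - S) := by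
    intro m
    rw [le_div_iff₀ (by linarith : (0:ℝ) < 1 - S)]
    nlinarith [geom_sum_mul S m, pow_nonneg hS0.le m]
  have hgeom0 : ∀ m : ℕ, 0 ≤ ∑ j ∈ Finset.range m, S ^ j :=
    fun m => Finset.sum_nonneg fun j _ => pow_nonneg hS0.le j
  -- ### partial sums of products bounded by r
  have hterm : ∀ i : ℕ, bb (i+1) * ee (i+1) ≤ h * (1 + h) / 2 * (B * η) * S ^ i := by
    intro i
    have h1 : (N₁ * h) ^ (2 ^ (i+1) - 2) ≤ 1 := pow_le_one₀ hN₁h0 hN₁h1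
    have h2 : (0:ℝ) ≤ h * (1 + h) / 2 * S ^ i := mul_nonneg hhp (pow_nonneg hS0.le i)
    calc bb (i+1) * ee (i+1)
        ≤ h * (1 + h) / 2 * S ^ (i + 1 - 1) * (N₁ * h) ^ (2 ^ (i+1) - 2) * (B * η) :=
          hTheta (i+1) (by omega)
      _ = (h * (1 + h) / 2 * S ^ i * (N₁ * h) ^ (2 ^ (i+1) - 2)) * (B * η) := by
          rw [Nat.add_sub_cancel]
      _ ≤ (h * (1 + h) / 2 * S ^ i * 1) * (B * η) := by
          apply mul_le_mul_of_nonneg_right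
            (mul_le_mul_of_nonneg_left h1 h2) (mul_nonneg hB0 hη0)
      _ = h * (1 + h) / 2 * (B * η) * S ^ i := by ring
  have hcore : B * η + h * (1 + h) / 2 * (B * η) * (1 / (1 - S)) ≤ r :=
    kogan_core a h B η S r haroot ha1 ha2 hh0 hha hB0 hη0 hS hr
  have hsum : ∀ n, (∑ k ∈ Finset.range n, bb k * ee k) ≤ r := by
    intro n
    cases n with
    | zero => simpa using hr0
    | succ m =>
      rw [Finset.sum_range_succ']
      have hs1 : (∑ i ∈ Finset.range m, bb (i+1) * ee (i+1))
          ≤ ∑ i ∈ Finset.range m, h * (1 + h) / 2 * (B * η) * S ^ i :=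
        Finset.sum_le_sum (fun i _ => hterm i)
      have hs2 : (∑ i ∈ Finset.range m, h * (1 + h) / 2 * (B * η) * S ^ i)
          = h * (1 + h) / 2 * (B * η) * ∑ i ∈ Finset.range m, S ^ i := by
        rw [Finset.mul_sum]
      have hc : (0:ℝ) ≤ h * (1 + h) / 2 * (B * η) :=
        mul_nonneg hhp (mul_nonneg hB0 hη0)
      have hs3 : h * (1 + h) / 2 * (B * η) * (∑ i ∈ Finset.range m, S ^ i)
          ≤ h * (1 + h) / 2 * (B * η) * (1 / (1 - S)) :=
        mul_le_mul_of_nonneg_left (hgeom m) hc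
      rw [bb0, ee0]
      rw [hs2] at hs1
      linarith [hcore]
  -- ### geometry of the ball
  have hmemball : ∀ z : X, ‖z - x₀‖ ≤ r → z ∈ Metric.closedBall x₀ r := fun z hz => by
    rwa [Metric.mem_closedBall, dist_eq_norm]
  have hlip : ∀ u ∈ Metric.closedBall x₀ r, ∀ w ∈ Metric.closedBall x₀ r,
      ‖P' u - P' w‖ ≤ K * ‖u - w‖ := by
    intro u hu w hw
    exact (convex_closedBall x₀ r).norm_image_sub_le_of_norm_hasFDerivWithin_le
      (fun z _ => (hP'' z).hasFDerivWithinAt)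
      (fun z hz => hKnorm z (by rwa [Metric.mem_closedBall, dist_eq_norm] at hz)) hw hu
  have hone : ‖(1 : X →L[ℝ] X)‖ ≤ 1 := by
    rw [ContinuousLinearMap.one_def]; exact ContinuousLinearMap.norm_id_le
  -- ### the main induction
  have main : ∀ n, ‖x n - x₀‖ ≤ (∑ k ∈ Finset.range n, bb k * ee k) ∧ ‖U n‖ ≤ bb n ∧
      ‖P (x n)‖ ≤ ee n ∧ ‖1 - (U n) * (P' (x n))‖ ≤ eps n ∧
      ‖1 - (P' (x n)) * (U n)‖ ≤ eps n := by
    intro n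
    induction n with
    | zero =>
      refine ⟨by simp [hx0], by rw [bb0]; exact hBnorm, by rw [hx0, ee0]; exact hηnorm, ?_, ?_⟩
      · rw [hx0, eps0]
        have hz : (1 : X →L[ℝ] X) - (U 0) * (P' x₀) = 0 := by
          rw [ContinuousLinearMap.mul_def, hU0l, ContinuousLinearMap.one_def, sub_self]
        rw [hz, norm_zero]
      · rw [hx0, eps0]
        have hz : (1 : X →L[ℝ] X) - (P' x₀) * (U 0) = 0 := by
          rw [ContinuousLinearMap.mul_def, hU0r, ContinuousLinearMap.one_def, sub_self]
        rw [hz, norm_zero]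
    | succ n ih =>
      obtain ⟨hxn, hUn, hPn, hel, her⟩ := ih
      obtain ⟨hbn, hen, hepn, hun, hNn⟩ := hinv n
      have hw0 : 0 ≤ bb n ^ 2 * ee n * K := by positivity
      have hd : ‖x (n+1) - x n‖ ≤ bb n * ee n := by
        rw [hxrec n]
        have : x n - (U n) (P (x n)) - x n = -((U n) (P (x n))) := by abel
        rw [this, norm_neg]
        calc ‖(U n) (P (x n))‖ ≤ ‖U n‖ * ‖P (x n)‖ := (U n).le_opNorm _
          _ ≤ bb n * ee n := mul_le_mul hUn hPn (norm_nonneg _) hbn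
      have hA : ‖x (n+1) - x₀‖ ≤ ∑ k ∈ Finset.range (n+1), bb k * ee k := by
        rw [Finset.sum_range_succ]
        have h1 : ‖x (n+1) - x₀‖ ≤ ‖x (n+1) - x n‖ + ‖x n - x₀‖ := by
          have := norm_add_le (x (n+1) - x n) (x n - x₀)
          simpa using this
        linarith
      have hxmem : x n ∈ Metric.closedBall x₀ r := hmemball _ (hxn.trans (hsum n))
      have hxmem1 : x (n+1) ∈ Metric.closedBall x₀ r := hmemball _ (hA.trans (hsum (n+1)))
      have hlipn : ‖P' (x (n+1)) - P' (x n)‖ ≤ K * ‖x (n+1) - x n‖ := hlip _ hxmem1 _ hxmem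
      have hP'lip : ‖P' (x n) - P' (x (n+1))‖ ≤ K * (bb n * ee n) := by
        rw [norm_sub_rev]
        exact hlipn.trans (mul_le_mul_of_nonneg_left hd hK0)
      have hAl : ‖1 - (U n) * (P' (x (n+1)))‖ ≤ eps n + bb n ^ 2 * ee n * K := by
        have hdecomp : (1 : X →L[ℝ] X) - (U n) * (P' (x (n+1)))
            = (1 - (U n) * (P' (x n))) + (U n) * ((P' (x n)) - (P' (x (n+1)))) := by
          noncomm_ring
        rw [hdecomp]
        calc ‖(1 - (U n) * (P' (x n))) + (U n) * ((P' (x n)) - (P' (x (n+1))))‖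
            ≤ ‖1 - (U n) * (P' (x n))‖ + ‖(U n) * ((P' (x n)) - (P' (x (n+1))))‖ :=
              norm_add_le _ _
          _ ≤ eps n + ‖U n‖ * ‖(P' (x n)) - (P' (x (n+1)))‖ :=
              add_le_add hel (norm_mul_le _ _)
          _ ≤ eps n + bb n * (K * (bb n * ee n)) := by
              have := mul_le_mul hUn hP'lip (norm_nonneg _) hbn
              linarith
          _ = eps n + bb n ^ 2 * ee n * K := by ring
      have hAr : ‖1 - (P' (x (n+1))) * (U n)‖ ≤ eps n + bb n ^ 2 * ee n * K := by
        have hdecomp : (1 : X →L[ℝ] X) - (P' (x (n+1))) * (U n)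
            = (1 - (P' (x n)) * (U n)) + ((P' (x n)) - (P' (x (n+1)))) * (U n) := by
          noncomm_ring
        rw [hdecomp]
        calc ‖(1 - (P' (x n)) * (U n)) + ((P' (x n)) - (P' (x (n+1)))) * (U n)‖
            ≤ ‖1 - (P' (x n)) * (U n)‖ + ‖((P' (x n)) - (P' (x (n+1)))) * (U n)‖ :=
              norm_add_le _ _
          _ ≤ eps n + ‖(P' (x n)) - (P' (x (n+1)))‖ * ‖U n‖ :=
              add_le_add her (norm_mul_le _ _)
          _ ≤ eps n + (K * (bb n * ee n)) * bb n := by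
              have := mul_le_mul hP'lip hUn (norm_nonneg _)
                (mul_nonneg hK0 (mul_nonneg hbn hen))
              linarith
          _ = eps n + bb n ^ 2 * ee n * K := by ring
      have hU1 : U (n+1) = ((2:ℝ) • (1 : X →L[ℝ] X) - (U n) * (P' (x (n+1)))) * (U n) := by
        rw [ContinuousLinearMap.mul_def, ContinuousLinearMap.mul_def,
          ContinuousLinearMap.one_def]
        exact hUrec n
      have h2smul : ((2:ℝ) • (1 : X →L[ℝ] X)) = 1 + 1 := two_smul ℝ _
      have hUb : ‖U (n+1)‖ ≤ bb (n+1) := by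
        rw [hU1, bbS]
        have hsplit : ((2:ℝ) • (1 : X →L[ℝ] X) - (U n) * (P' (x (n+1))))
            = 1 + (1 - (U n) * (P' (x (n+1)))) := by rw [h2smul]; noncomm_ring
        calc ‖((2:ℝ) • (1 : X →L[ℝ] X) - (U n) * (P' (x (n+1)))) * (U n)‖
            ≤ ‖(2:ℝ) • (1 : X →L[ℝ] X) - (U n) * (P' (x (n+1)))‖ * ‖U n‖ := norm_mul_le _ _
          _ ≤ (1 + (eps n + bb n ^ 2 * ee n * K)) * bb n := by
              apply mul_le_mul _ hUn (norm_nonneg _) (by linarith)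
              rw [hsplit]
              exact (norm_add_le _ _).trans (add_le_add hone hAl)
          _ = bb n * (1 + (eps n + bb n ^ 2 * ee n * K)) := mul_comm _ _
      have hepsl : ‖1 - (U (n+1)) * (P' (x (n+1)))‖ ≤ eps (n+1) := by
        have hidl : (1 : X →L[ℝ] X) - (U (n+1)) * (P' (x (n+1)))
            = (1 - (U n) * (P' (x (n+1)))) * (1 - (U n) * (P' (x (n+1)))) := by
          rw [hU1, h2smul]; noncomm_ring
        rw [hidl, epsS]
        calc ‖(1 - (U n) * (P' (x (n+1)))) * (1 - (U n) * (P' (x (n+1))))‖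
            ≤ ‖1 - (U n) * (P' (x (n+1)))‖ * ‖1 - (U n) * (P' (x (n+1)))‖ := norm_mul_le _ _
          _ ≤ (eps n + bb n ^ 2 * ee n * K) * (eps n + bb n ^ 2 * ee n * K) :=
              mul_le_mul hAl hAl (norm_nonneg _) (by linarith)
          _ = (eps n + bb n ^ 2 * ee n * K) ^ 2 := (sq _).symm
      have hepsr : ‖1 - (P' (x (n+1))) * (U (n+1))‖ ≤ eps (n+1) := by
        have hidr : (1 : X →L[ℝ] X) - (P' (x (n+1))) * (U (n+1))
            = (1 - (P' (x (n+1))) * (U n)) * (1 - (P' (x (n+1))) * (U n)) := by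
          rw [hU1, h2smul]; noncomm_ring
        rw [hidr, epsS]
        calc ‖(1 - (P' (x (n+1))) * (U n)) * (1 - (P' (x (n+1))) * (U n))‖
            ≤ ‖1 - (P' (x (n+1))) * (U n)‖ * ‖1 - (P' (x (n+1))) * (U n)‖ := norm_mul_le _ _
          _ ≤ (eps n + bb n ^ 2 * ee n * K) * (eps n + bb n ^ 2 * ee n * K) :=
              mul_le_mul hAr hAr (norm_nonneg _) (by linarith)
          _ = (eps n + bb n ^ 2 * ee n * K) ^ 2 := (sq _).symm
      have hPb : ‖P (x (n+1))‖ ≤ ee (n+1) := by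
        have htay := kogan_taylor P P' hP' (convex_closedBall x₀ r) hlip hxmem hxmem1
        have hsplit : P (x (n+1)) = (P (x (n+1)) - P (x n) - P' (x n) (x (n+1) - x n))
            + ((1 - (P' (x n)) * (U n)) (P (x n))) := by
          have hx1 : x (n+1) - x n = -((U n) (P (x n))) := by rw [hxrec n]; abel
          rw [hx1]
          simp only [map_neg, ContinuousLinearMap.sub_apply, ContinuousLinearMap.mul_apply,
            ContinuousLinearMap.one_apply]
          abel
        rw [hsplit, eeS]
        calc ‖(P (x (n+1)) - P (x n) - P' (x n) (x (n+1) - x n))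
              + ((1 - (P' (x n)) * (U n)) (P (x n)))‖
            ≤ ‖P (x (n+1)) - P (x n) - P' (x n) (x (n+1) - x n)‖
              + ‖(1 - (P' (x n)) * (U n)) (P (x n))‖ := norm_add_le _ _
          _ ≤ K / 2 * ‖x (n+1) - x n‖ ^ 2
              + ‖1 - (P' (x n)) * (U n)‖ * ‖P (x n)‖ :=
              add_le_add htay ((1 - (P' (x n)) * (U n)).le_opNorm _)
          _ ≤ K / 2 * (bb n * ee n) ^ 2 + eps n * ee n := by
              have h1 : ‖x (n+1) - x n‖ ^ 2 ≤ (bb n * ee n) ^ 2 :=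
                pow_le_pow_left₀ (norm_nonneg _) hd 2
              have h2 := mul_le_mul_of_nonneg_left h1 (by positivity : (0:ℝ) ≤ K / 2)
              have h3 := mul_le_mul her hPn (norm_nonneg _) hepn
              linarith
          _ = (eps n + bb n ^ 2 * ee n * K / 2) * ee n := by ring
      exact ⟨hA, hUb, hPb, hepsl, hepsr⟩
  -- ### ball membership of the whole sequence
  have hxball : ∀ n, ‖x n - x₀‖ ≤ r := fun n => (main n).1.trans (hsum n)
  refine ⟨hxball, ?_⟩
  -- ### convergence
  have hdn : ∀ n, ‖x (n+1) - x n‖ ≤ bb n * ee n := by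
    intro n
    rw [hxrec n]
    have h0 : x n - (U n) (P (x n)) - x n = -((U n) (P (x n))) := by abel
    rw [h0, norm_neg]
    calc ‖(U n) (P (x n))‖ ≤ ‖U n‖ * ‖P (x n)‖ := (U n).le_opNorm _
      _ ≤ bb n * ee n := mul_le_mul (main n).2.1 (main n).2.2.1 (norm_nonneg _) (hinv n).1
  have hpn : ∀ n, bb n * ee n ≤ (B * η * (1 + h * (1 + h) / (2 * S))) * S ^ n := by
    intro n
    have hcS : 0 ≤ h * (1 + h) / (2 * S) := div_nonneg hhp2 (by linarith)
    cases n with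
    | zero =>
      rw [bb0, ee0, pow_zero, mul_one]
      have h1 : B * η * 1 ≤ B * η * (1 + h * (1 + h) / (2 * S)) :=
        mul_le_mul_of_nonneg_left (by linarith) (mul_nonneg hB0 hη0)
      simpa using h1
    | succ m =>
      calc bb (m+1) * ee (m+1) ≤ h * (1 + h) / 2 * (B * η) * S ^ m := hterm m
        _ = (B * η * (h * (1 + h) / (2 * S))) * S ^ (m+1) := by
            rw [pow_succ]
            field_simp
        _ ≤ (B * η * (1 + h * (1 + h) / (2 * S))) * S ^ (m+1) := by
            apply mul_le_mul_of_nonneg_right _ (pow_nonneg hS0.le _)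
            exact mul_le_mul_of_nonneg_left (by linarith) (mul_nonneg hB0 hη0)
  have hcauchy : CauchySeq x := by
    apply cauchySeq_of_le_geometric S (B * η * (1 + h * (1 + h) / (2 * S))) hS1
    intro n
    rw [dist_eq_norm, norm_sub_rev]
    exact (hdn n).trans (hpn n)
  obtain ⟨xs, hxs⟩ := cauchySeq_tendsto_of_complete hcauchy
  refine ⟨xs, ?_, ?_, hxs, ?_⟩
  · have htd : Filter.Tendsto (fun n => ‖x n - x₀‖) Filter.atTop (nhds ‖xs - x₀‖) :=
      ((hxs.sub_const x₀).norm)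
    exact le_of_tendsto htd (Filter.Eventually.of_forall hxball)
  · have hcont : Filter.Tendsto (fun n => P (x n)) Filter.atTop (nhds (P xs)) :=
      ((hP' xs).continuousAt.tendsto).comp hxs
    have hee : ∀ n, ee n ≤ a ^ n * η := by
      intro n
      induction n with
      | zero => rw [ee0, pow_zero, one_mul]
      | succ m ihm =>
        obtain ⟨hbm, hem, hepm, hum, _⟩ := hinv m
        have hw0 : 0 ≤ bb m ^ 2 * ee m * K := by positivity
        rw [eeS]
        have hf : eps m + bb m ^ 2 * ee m * K / 2 ≤ a := by linarith [hum, hha]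
        calc (eps m + bb m ^ 2 * ee m * K / 2) * ee m ≤ a * (a ^ m * η) :=
            mul_le_mul hf ihm hem ha0.le
          _ = a ^ (m+1) * η := by rw [pow_succ]; ring
    have hP0 : Filter.Tendsto (fun n => ‖P (x n)‖) Filter.atTop (nhds 0) := by
      apply squeeze_zero (fun n => norm_nonneg _) (fun n => (main n).2.2.1.trans (hee n))
      have := (tendsto_pow_atTop_nhds_zero_of_lt_one ha0.le
        (lt_trans ha2 (by norm_num))).mul_const η
      simpa using this
    have : ‖P xs‖ = 0 := tendsto_nhds_unique hcont.norm hP0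
    exact norm_eq_zero.1 this
  · intro n hn
    have hC0 : (0:ℝ) ≤ h * (1 + h) / 2 * S ^ (n - 1) * (N₁ * h) ^ (2 ^ n - 2) * (B * η) :=
      mul_nonneg (mul_nonneg (mul_nonneg hhp (pow_nonneg hS0.le _))
        (pow_nonneg hN₁h0 _)) (mul_nonneg hB0 hη0)
    have htail : ∀ m : ℕ, ‖x (n + m) - x n‖
        ≤ h * (1 + h) / 2 * S ^ (n - 1) * (N₁ * h) ^ (2 ^ n - 2) * (B * η)
          * (∑ j ∈ Finset.range m, S ^ j) := by
      intro m
      induction m with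
      | zero => simp
      | succ m ihm =>
        have hstep : ‖x (n + m + 1) - x (n + m)‖
            ≤ (h * (1 + h) / 2 * S ^ (n - 1) * (N₁ * h) ^ (2 ^ n - 2) * (B * η)) * S ^ m := by
          have h1 : bb (n + m) * ee (n + m)
              ≤ h * (1 + h) / 2 * S ^ (n + m - 1) * (N₁ * h) ^ (2 ^ (n + m) - 2) * (B * η) :=
            hTheta (n + m) (by omega)
          have hpow1 : S ^ (n + m - 1) = S ^ (n - 1) * S ^ m := by
            rw [← pow_add]
            congr 1
            omega
          have hpow2 : (N₁ * h) ^ (2 ^ (n + m) - 2) ≤ (N₁ * h) ^ (2 ^ n - 2) := by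
            apply pow_le_pow_of_le_one hN₁h0 hN₁h1
            have : 2 ^ n ≤ 2 ^ (n + m) := Nat.pow_le_pow_right (by norm_num) (by omega)
            omega
          calc ‖x (n + m + 1) - x (n + m)‖ ≤ bb (n + m) * ee (n + m) := hdn (n + m)
            _ ≤ h * (1 + h) / 2 * S ^ (n + m - 1) * (N₁ * h) ^ (2 ^ (n + m) - 2) * (B * η) := h1
            _ = (h * (1 + h) / 2 * S ^ (n - 1) * S ^ m) * (N₁ * h) ^ (2 ^ (n + m) - 2)
                * (B * η) := by rw [hpow1]; ring
            _ ≤ (h * (1 + h) / 2 * S ^ (n - 1) * S ^ m) * (N₁ * h) ^ (2 ^ n - 2)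
                * (B * η) := by
                apply mul_le_mul_of_nonneg_right
                  (mul_le_mul_of_nonneg_left hpow2 ?_) (mul_nonneg hB0 hη0)
                exact mul_nonneg (mul_nonneg hhp (pow_nonneg hS0.le _))
                  (pow_nonneg hS0.le _)
            _ = (h * (1 + h) / 2 * S ^ (n - 1) * (N₁ * h) ^ (2 ^ n - 2) * (B * η)) * S ^ m := by
                ring
        have htri : ‖x (n + (m + 1)) - x n‖
            ≤ ‖x (n + m + 1) - x (n + m)‖ + ‖x (n + m) - x n‖ := by
          have h0 : n + (m + 1) = n + m + 1 := by omega
          rw [h0]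
          have := norm_add_le (x (n + m + 1) - x (n + m)) (x (n + m) - x n)
          simpa using this
        rw [Finset.sum_range_succ, mul_add]
        calc ‖x (n + (m + 1)) - x n‖
            ≤ ‖x (n + m + 1) - x (n + m)‖ + ‖x (n + m) - x n‖ := htri
          _ ≤ (h * (1 + h) / 2 * S ^ (n - 1) * (N₁ * h) ^ (2 ^ n - 2) * (B * η)) * S ^ m
              + h * (1 + h) / 2 * S ^ (n - 1) * (N₁ * h) ^ (2 ^ n - 2) * (B * η)
                * (∑ j ∈ Finset.range m, S ^ j) := add_le_add hstep ihm
          _ = h * (1 + h) / 2 * S ^ (n - 1) * (N₁ * h) ^ (2 ^ n - 2) * (B * η)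
                * (∑ j ∈ Finset.range m, S ^ j)
              + h * (1 + h) / 2 * S ^ (n - 1) * (N₁ * h) ^ (2 ^ n - 2) * (B * η) * S ^ m := by
              ring
    have hlim : Filter.Tendsto (fun m => ‖x (n + m) - x n‖) Filter.atTop
        (nhds ‖xs - x n‖) := by
      have h1 : Filter.Tendsto (fun m : ℕ => x (n + m)) Filter.atTop (nhds xs) :=
        hxs.comp (Filter.tendsto_atTop_mono (fun m => Nat.le_add_left m n) Filter.tendsto_id)
      exact (h1.sub_const (x n)).norm
    have hbnd : ‖xs - x n‖
        ≤ h * (1 + h) / 2 * S ^ (n - 1) * (N₁ * h) ^ (2 ^ n - 2) * (B * η) * (1 / (1 - S)) := by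
      apply le_of_tendsto hlim
      apply Filter.Eventually.of_forall
      intro m
      exact (htail m).trans (mul_le_mul_of_nonneg_left (hgeom m) hC0)
    calc ‖x n - xs‖ = ‖xs - x n‖ := norm_sub_rev _ _
      _ ≤ h * (1 + h) / 2 * S ^ (n - 1) * (N₁ * h) ^ (2 ^ n - 2) * (B * η) * (1 / (1 - S)) :=
        hbnd
      _ = h * (1 + h) / 2 * (S ^ (n - 1) / (1 - S)) * (N₁ * h) ^ (2 ^ n - 2) * B * η := by
        ring
end

section
/- With the sequences α_k, β_k, A_k, c_k, q_k of the Kogan iteration (α₁=1, β₁=1/2, c₁=1+h, A₁=1, α_k = c_{k-1}β_{k-1}, β_k = A_{k-1}²β_{k-1} + α_k²/2, A_k = A_{k-1}² + α_k c_{k-1}, c_k = c_{k-1}(1 + q_k), q_k = A_k h^{2^{k-1}}), one has for k ≥ 3: q_k = q_{k-1}² + (1/2)(1+q_{k-1})²(q_{k-1}² - q_{k-2}⁴). -/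
/-!
Put `r_k := c_k² β_k h^{2^k}`. Since `α_{k+1} c_k = c_k² β_k`, the recursion for `A` gives
`q_{k+1} = q_k² + r_k`, and the recursions for `c` and `β` give
`r_{k+1} = (1 + q_{k+1})² r_k (q_k² + r_k / 2)`. Substituting `r_k = q_{k+1} - q_k²` into the second
identity and the result into the first yields the two-step recursion, because
`r_k (2 q_k² + r_k) = q_{k+1}² - q_k⁴`.
-/

namespace Kogan

def correction (β c : ℕ → ℝ) (h : ℝ) (k : ℕ) : ℝ := c k ^ 2 * β k * h ^ 2 ^ k

variable {h : ℝ} {α β A c q : ℕ → ℝ}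

theorem q_succ_eq_sq_add_correction
    (hα : ∀ n, α (n + 2) = c (n + 1) * β (n + 1))
    (hA : ∀ n, A (n + 2) = A (n + 1) ^ 2 + α (n + 2) * c (n + 1))
    (hq : ∀ n, q (n + 1) = A (n + 1) * h ^ 2 ^ n) (n : ℕ) :
    q (n + 2) = q (n + 1) ^ 2 + correction β c h (n + 1) := by
  rw [hq, hq, hA, hα, correction, pow_succ 2 n, pow_mul]
  ring

theorem correction_succ
    (hα : ∀ n, α (n + 2) = c (n + 1) * β (n + 1))
    (hβ : ∀ n, β (n + 2) = A (n + 1) ^ 2 * β (n + 1) + α (n + 2) ^ 2 / 2)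
    (hc : ∀ n, c (n + 2) = c (n + 1) * (1 + q (n + 2)))
    (hq : ∀ n, q (n + 1) = A (n + 1) * h ^ 2 ^ n) (n : ℕ) :
    correction β c h (n + 2) =
      (1 + q (n + 2)) ^ 2 * correction β c h (n + 1) *
        (q (n + 1) ^ 2 + correction β c h (n + 1) / 2) := by
  simp only [correction]
  rw [hc, hβ, hα, hq n, pow_succ 2 (n + 1), pow_mul, pow_succ 2 n, pow_mul]
  ring

end Kogan

open Kogan in
theorem q_recursion_two_back_general (h : ℝ)
    (α β A c q : ℕ → ℝ)
    (hα : ∀ k, 2 ≤ k → α k = c (k - 1) * β (k - 1))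
    (hβ : ∀ k, 2 ≤ k → β k = A (k - 1) ^ 2 * β (k - 1) + α k ^ 2 / 2)
    (hA : ∀ k, 2 ≤ k → A k = A (k - 1) ^ 2 + α k * c (k - 1))
    (hc : ∀ k, 2 ≤ k → c k = c (k - 1) * (1 + q k))
    (hq : ∀ k, q k = A k * h ^ 2 ^ (k - 1)) :
    ∀ k, 3 ≤ k →
      q k = q (k - 1) ^ 2 +
        1 / 2 * (1 + q (k - 1)) ^ 2 * (q (k - 1) ^ 2 - q (k - 2) ^ 4) := by
  have hα' (n : ℕ) := hα (n + 2) (by omega)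
  have hβ' (n : ℕ) := hβ (n + 2) (by omega)
  have hA' (n : ℕ) := hA (n + 2) (by omega)
  have hc' (n : ℕ) := hc (n + 2) (by omega)
  have hq' (n : ℕ) := hq (n + 1)
  simp only [Nat.add_sub_cancel] at hα' hβ' hA' hc' hq'
  intro k hk
  obtain ⟨n, rfl⟩ : ∃ n, k = n + 3 := ⟨k - 3, by omega⟩
  have hq_succ := q_succ_eq_sq_add_correction hα' hA' hq'
  have hr : correction β c h (n + 1) = q (n + 2) - q (n + 1) ^ 2 := by
    linarith [hq_succ n]
  rw [show n + 3 - 1 = n + 2 by omega, show n + 3 - 2 = n + 1 by omega, hq_succ (n + 1),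
    correction_succ hα' hβ' hc' hq', hr]
  ring

theorem q_recursion_two_back (h : ℝ) (hh : 0 ≤ h)
    (α β A c q : ℕ → ℝ)
    (hα1 : α 1 = 1) (hβ1 : β 1 = 1 / 2) (hc1 : c 1 = 1 + h) (hA1 : A 1 = 1)
    (hα : ∀ k, 2 ≤ k → α k = c (k - 1) * β (k - 1))
    (hβ : ∀ k, 2 ≤ k → β k = A (k - 1) ^ 2 * β (k - 1) + α k ^ 2 / 2)
    (hA : ∀ k, 2 ≤ k → A k = A (k - 1) ^ 2 + α k * c (k - 1))
    (hc : ∀ k, 2 ≤ k → c k = c (k - 1) * (1 + q k))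
    (hq : ∀ k, q k = A k * h ^ 2 ^ (k - 1)) :
    ∀ k, 3 ≤ k →
      q k = q (k - 1) ^ 2 +
        1 / 2 * (1 + q (k - 1)) ^ 2 * (q (k - 1) ^ 2 - q (k - 2) ^ 4) :=
  q_recursion_two_back_general h α β A c q hα hβ hA hc hq
end

section
/- With ε_k = α_k h^{2^{k-1}-1} and q_k = A_k h^{2^{k-1}} from the Kogan iteration sequences, for k ≥ 3 one has ε_k = (1/2)·ε_{k-1}·(1+q_{k-1})·(q_{k-1} + q_{k-2}²). -/
/-!
Expanding `α_{k+1} = c_k β_k` by `c_k = c_{k-1} (1 + q_k)`, `β_k = A_{k-1}² β_{k-1} + α_k² / 2`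
and `α_k = c_{k-1} β_{k-1}`, then regrouping with `A_k = A_{k-1}² + α_k c_{k-1}`, gives
`α_{k+1} = ½ α_k (1 + q_k) (A_k + A_{k-1}²)`, an identity free of `h`. Multiplying by
`h^{2^k - 1} = h^{2^{k-1} - 1} · h^{2^{k-1}}` turns `α_{k+1}`, `α_k`, `A_k`, `A_{k-1}²` into
`ε_{k+1}`, `ε_k`, `q_k`, `q_{k-1}²`.
-/

theorem pow_two_pow_succ_sub_one {M : Type*} [Monoid M] (x : M) (n : ℕ) :
    x ^ (2 ^ (n + 1) - 1) = x ^ (2 ^ n - 1) * x ^ 2 ^ n := by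
  rw [← pow_add]
  congr 1
  have := Nat.one_le_two_pow (n := n)
  rw [pow_succ]
  omega

theorem kogan_alpha_add_two {K : Type*} [Field K] [CharZero K] (α β A c : ℕ → K) (r : K)
    (n : ℕ) (hα₂ : α (n + 2) = c (n + 1) * β (n + 1)) (hα₁ : α (n + 1) = c n * β n)
    (hβ : β (n + 1) = A n ^ 2 * β n + α (n + 1) ^ 2 / 2)
    (hA : A (n + 1) = A n ^ 2 + α (n + 1) * c n) (hc : c (n + 1) = c n * r) :
    α (n + 2) = 1 / 2 * α (n + 1) * r * (A (n + 1) + A n ^ 2) := by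
  rw [hα₂, hβ, hA, hc, hα₁]
  ring

theorem eps_recursion_general (h : ℝ)
    (α β A c q ε : ℕ → ℝ)
    (hα : ∀ k, 2 ≤ k → α k = c (k - 1) * β (k - 1))
    (hβ : ∀ k, 2 ≤ k → β k = A (k - 1) ^ 2 * β (k - 1) + α k ^ 2 / 2)
    (hA : ∀ k, 2 ≤ k → A k = A (k - 1) ^ 2 + α k * c (k - 1))
    (hc : ∀ k, 2 ≤ k → c k = c (k - 1) * (1 + A k * h ^ 2 ^ (k - 1)))
    (hq : ∀ k, q k = A k * h ^ 2 ^ (k - 1))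
    (hε : ∀ k, ε k = α k * h ^ (2 ^ (k - 1) - 1)) :
    ∀ k, 3 ≤ k →
      ε k = 1 / 2 * ε (k - 1) * (1 + q (k - 1)) * (q (k - 1) + q (k - 2) ^ 2) := by
  have hε' : ∀ n, ε (n + 1) = α (n + 1) * h ^ (2 ^ n - 1) := fun n => hε (n + 1)
  have hq' : ∀ n, q (n + 1) = A (n + 1) * h ^ 2 ^ n := fun n => hq (n + 1)
  intro k hk
  obtain ⟨n, rfl⟩ : ∃ n, k = n + 3 := ⟨k - 3, by omega⟩
  have hα₃ : α (n + 3) =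
      1 / 2 * α (n + 2) * (1 + A (n + 2) * h ^ 2 ^ (n + 1)) * (A (n + 2) + A (n + 1) ^ 2) :=
    kogan_alpha_add_two α β A c _ (n + 1) (hα (n + 3) (by omega)) (hα (n + 2) (by omega))
      (hβ (n + 2) (by omega)) (hA (n + 2) (by omega)) (hc (n + 2) (by omega))
  show ε (n + 3) = 1 / 2 * ε (n + 2) * (1 + q (n + 2)) * (q (n + 2) + q (n + 1) ^ 2)
  rw [hε', hα₃, hε', hq', hq', pow_two_pow_succ_sub_one]
  ring

theorem eps_recursion (h : ℝ) (hh : 0 < h)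
    (α β A c q ε : ℕ → ℝ)
    (hα1 : α 1 = 1) (hβ1 : β 1 = 1 / 2) (hc1 : c 1 = 1 + h) (hA1 : A 1 = 1)
    (hα : ∀ k, 2 ≤ k → α k = c (k - 1) * β (k - 1))
    (hβ : ∀ k, 2 ≤ k → β k = A (k - 1) ^ 2 * β (k - 1) + α k ^ 2 / 2)
    (hA : ∀ k, 2 ≤ k → A k = A (k - 1) ^ 2 + α k * c (k - 1))
    (hc : ∀ k, 2 ≤ k → c k = c (k - 1) * (1 + A k * h ^ 2 ^ (k - 1)))
    (hq : ∀ k, q k = A k * h ^ 2 ^ (k - 1))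
    (hε : ∀ k, ε k = α k * h ^ (2 ^ (k - 1) - 1)) :
    ∀ k, 3 ≤ k →
      ε k = 1 / 2 * ε (k - 1) * (1 + q (k - 1)) * (q (k - 1) + q (k - 2) ^ 2) :=
  eps_recursion_general h α β A c q ε hα hβ hA hc hq hε
end

section
/- Let h ∈ [0,a] with a the real root of a³+2a²+3a-2 = 0, and define S = 2(1+h)/(h²+2h+3), N₁ = (h²+2h+3)/2, M = (1/2)(1+h)(1+N₁). Then M/N₁² ≤ S; equivalently, (1+h)(1+N₁)/(2N₁²) < 1/(1 + (1+h²)/(2(1+h))). -/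
/-! With `N₁ = ((1 + h)² + 2) / 2` one has `S = (1 + h) / N₁`, and the right-hand side of the
second inequality is `S` as well. Hence both claims reduce to `(1 + N₁) / (2 N₁) < 1`, i.e. to
`N₁ > 1`. -/

lemma mul_one_add_div_two_mul_sq_lt_div {x N : ℝ} (hx : 0 < x) (hN : 1 < N) :
    x * (1 + N) / (2 * N ^ 2) < x / N := by
  have hN0 : 0 < N := by linarith
  rw [div_lt_div_iff₀ (by positivity) hN0]
  nlinarith [mul_pos (mul_pos hx hN0) (sub_pos.2 hN)]

lemma one_div_one_add_one_add_sq_div_eq {h : ℝ} (h1 : 0 < 1 + h) :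
    1 / (1 + (1 + h ^ 2) / (2 * (1 + h))) = (1 + h) / ((h ^ 2 + 2 * h + 3) / 2) := by
  have hD : 0 < h ^ 2 + 2 * h + 3 := by nlinarith
  rw [div_div_eq_mul_div, eq_div_iff hD.ne', one_add_div (by positivity)]
  field_simp
  ring

theorem M_div_N1_sq_le_S_general
    (h : ℝ) (hh0 : 0 ≤ h)
    (N₁ S M : ℝ) (hN₁ : N₁ = (h ^ 2 + 2 * h + 3) / 2)
    (hS : S = 2 * (1 + h) / (h ^ 2 + 2 * h + 3))
    (hM : M = (1 + h) * (1 + N₁) / 2) :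
    M / N₁ ^ 2 ≤ S ∧
      (1 + h) * (1 + N₁) / (2 * N₁ ^ 2) <
        1 / (1 + (1 + h ^ 2) / (2 * (1 + h))) := by
  have h1 : 0 < 1 + h := by linarith
  have hN : 1 < N₁ := by rw [hN₁]; nlinarith
  have hS' : S = (1 + h) / N₁ := by
    rw [hS, hN₁, div_div_eq_mul_div, mul_comm]
  have key := mul_one_add_div_two_mul_sq_lt_div h1 hN
  refine ⟨?_, ?_⟩
  · rw [hM, hS', div_div]
    exact key.le
  · rw [one_div_one_add_one_add_sq_div_eq h1, ← hN₁]
    exact key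

theorem M_div_N1_sq_le_S (a : ℝ) (ha : a ^ 3 + 2 * a ^ 2 + 3 * a - 2 = 0)
    (ha1 : (0.477 : ℝ) < a) (ha2 : a < 0.478)
    (h : ℝ) (hh0 : 0 ≤ h) (hha : h ≤ a)
    (N₁ S M : ℝ) (hN₁ : N₁ = (h ^ 2 + 2 * h + 3) / 2)
    (hS : S = 2 * (1 + h) / (h ^ 2 + 2 * h + 3))
    (hM : M = (1 + h) * (1 + N₁) / 2) :
    M / N₁ ^ 2 ≤ S ∧
      (1 + h) * (1 + N₁) / (2 * N₁ ^ 2) <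
        1 / (1 + (1 + h ^ 2) / (2 * (1 + h))) :=
  M_div_N1_sq_le_S_general h hh0 N₁ S M hN₁ hS hM
end
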